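/- Let (λ_k) be a sequence of strictly positive reals whose counting function satisfies #{k : λ_k ≤ T} ≤ C·T for all T ≥ 1. Then for every complex s with Re s > 1, the series Σ_k λ_k^{−s} and, for each t > 0, the series Σ_k e^{−λ_k t} converge absolutely, the function t ↦ (Σ_k e^{−λ_k t}) t^{s−1} is integrable on (0, ∞), and Γ(s) · Σ_k λ_k^{−s} = ∫₀^∞ ( Σ_k e^{−λ_k t} ) t^{s−1} dt. -/

import Mathlib

open MeasureTheory Complex

/-!
Sorting the `λ_k > 1` into dyadic blocks `2ⁿ ≤ λ_k < 2ⁿ⁺¹`, the counting bound allows at most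
`C 2ⁿ⁺¹` of them in the `n`-th block, so `∑ λ_k^{-σ} ≤ (finitely many terms) + ∑ₙ C 2ⁿ⁺¹ 2^{-nσ}`,
which converges for `σ > 1`. Since `e^{-y} ≤ 2 / y²`, the heat trace is dominated by the case
`σ = 2`. Finally `∫₀^∞ t^{s-1} e^{-λt} dt = Γ(s) λ^{-s}` and the absolute integrals `Γ(σ) λ^{-σ}`
are summable, so the series of the integrands converges in `L¹`: this gives integrability of the
Mellin integrand and lets the sum be exchanged with the integral.
-/

theorem summable_comp_of_card_fiber_le {ι : Type*} {N : ι → ℕ} {a c : ℕ → ℝ}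
    (ha : ∀ n, 0 ≤ a n) (hfin : ∀ n, (N ⁻¹' {n}).Finite)
    (hcard : ∀ n, (Nat.card (N ⁻¹' {n}) : ℝ) ≤ c n) (hsum : Summable fun n => c n * a n) :
    Summable fun k => a (N k) := by
  rw [← (Equiv.sigmaFiberEquiv N).summable_iff]
  have hfiber_sum (n : ℕ) : ∑' k : {k // N k = n}, a (N k) = Nat.card (N ⁻¹' {n}) * a n := by
    rw [tsum_congr fun k : {k // N k = n} => congrArg a k.2, tsum_const, nsmul_eq_mul]
    rfl
  refine (summable_sigma_of_nonneg fun _ => ha _).mpr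
    ⟨fun n => ?_, hsum.of_nonneg_of_le (fun n => tsum_nonneg fun _ => ha _) fun n => ?_⟩
  · have : Finite {k // N k = n} := (hfin n).to_subtype
    exact Summable.of_finite
  · simp only [Equiv.sigmaFiberEquiv_apply]
    rw [hfiber_sum]
    exact mul_le_mul_of_nonneg_right (hcard n) (ha n)

theorem lt_two_pow_log_floor_succ (x : ℝ) : x < 2 ^ (Nat.log 2 ⌊x⌋₊ + 1) := by
  calc x < ⌊x⌋₊ + 1 := Nat.lt_floor_add_one x
    _ ≤ 2 ^ (Nat.log 2 ⌊x⌋₊ + 1) := by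
      exact_mod_cast Nat.lt_pow_succ_log_self one_lt_two _

theorem two_pow_log_floor_le {x : ℝ} (hx : 1 ≤ x) : 2 ^ Nat.log 2 ⌊x⌋₊ ≤ x := by
  calc (2 : ℝ) ^ Nat.log 2 ⌊x⌋₊ ≤ ⌊x⌋₊ := by
        exact_mod_cast Nat.pow_log_le_self 2 (Nat.floor_pos.mpr hx).ne'
    _ ≤ x := Nat.floor_le (by linarith)

theorem Real.exp_neg_le_two_div_sq {y : ℝ} (hy : 0 < y) : Real.exp (-y) ≤ 2 / y ^ 2 := by
  have h := Real.pow_div_factorial_le_exp y hy.le 2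
  rw [Real.exp_neg, le_div_iff₀ (by positivity)]
  rw [Nat.factorial_two, Nat.cast_ofNat, div_le_iff₀ two_pos] at h
  calc (Real.exp y)⁻¹ * y ^ 2 ≤ (Real.exp y)⁻¹ * (Real.exp y * 2) := by gcongr
    _ = 2 := by field_simp

theorem MeasureTheory.integrable_tsum_of_summable_integral_norm {α E ι : Type*}
    [MeasurableSpace α] {μ : Measure α} [NormedAddCommGroup E] [CompleteSpace E] [Countable ι]
    {F : ι → α → E} (hF_int : ∀ i, Integrable (F i) μ)
    (hF_sum : Summable fun i => ∫ a, ‖F i a‖ ∂μ) :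
    Integrable (fun a => ∑' i, F i a) μ := by
  have hL1 : ∑' i, ‖(hF_int i).toL1 (F i)‖ₑ ≠ ⊤ := by
    refine ENNReal.tsum_coe_ne_top_iff_summable.mpr (NNReal.summable_coe.mp ?_)
    simpa only [coe_nnnorm, L1.norm_of_fun_eq_integral_norm] using hF_sum
  have hae : ∀ᵐ a ∂μ, ∀ i, (hF_int i).toL1 (F i) a = F i a :=
    ae_all_iff.mpr fun i => (hF_int i).coeFn_toL1
  refine (L1.integrable_coeFn (∑' i, (hF_int i).toL1 (F i))).congr ?_
  filter_upwards [Lp.coeFn_tsum hL1, hae] with a hsum hterm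
  rw [hsum]
  exact tsum_congr hterm

section CountingFunction

variable {ι : Type*} {lam : ι → ℝ} {C : ℝ}
  (hcount : ∀ T : ℝ, 1 ≤ T → ∃ h : Set.Finite {k | lam k ≤ T}, (h.toFinset.card : ℝ) ≤ C * T)
include hcount

theorem summable_rpow_neg_of_card_le {σ : ℝ} (hσ : 1 < σ) : Summable fun k => lam k ^ (-σ) := by
  let N : ι → ℕ := fun k => Nat.log 2 ⌊lam k⌋₊
  have hfiber (n : ℕ) : N ⁻¹' {n} ⊆ {k | lam k ≤ 2 ^ (n + 1)} := by
    rintro k rfl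
    exact (lt_two_pow_log_floor_succ _).le
  have hfiber_card (n : ℕ) : (Nat.card (N ⁻¹' {n}) : ℝ) ≤ C * 2 ^ (n + 1) := by
    obtain ⟨hfin, hcard⟩ := hcount (2 ^ (n + 1)) (one_le_pow₀ one_le_two)
    calc (Nat.card (N ⁻¹' {n}) : ℝ) ≤ hfin.toFinset.card := by
          rw [← Nat.card_eq_card_finite_toFinset]
          exact_mod_cast Nat.card_mono hfin (hfiber n)
      _ ≤ C * 2 ^ (n + 1) := hcard
  have hratio : (2 : ℝ) * 2 ^ (-σ) < 1 := by
    have : (2 : ℝ) ^ (-σ) < 2 ^ (-1 : ℝ) :=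
      Real.rpow_lt_rpow_of_exponent_lt one_lt_two (by linarith)
    rw [Real.rpow_neg_one] at this
    linarith
  have hgeom : Summable fun n : ℕ => C * 2 ^ (n + 1) * ((2 : ℝ) ^ n) ^ (-σ) := by
    refine ((summable_geometric_of_lt_one (by positivity) hratio).mul_left (2 * C)).congr
      fun n => ?_
    rw [← Real.rpow_natCast_mul zero_le_two, mul_comm (n : ℝ), Real.rpow_mul_natCast zero_le_two]
    ring
  have hdyadic : Summable fun k => ((2 : ℝ) ^ N k) ^ (-σ) :=
    summable_comp_of_card_fiber_le (N := N) (a := fun n => ((2 : ℝ) ^ n) ^ (-σ))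
      (fun n => by positivity)
      (fun n => (hcount _ (one_le_pow₀ one_le_two)).1.subset (hfiber n)) hfiber_card hgeom
  refine hdyadic.of_norm_bounded_eventually ?_
  filter_upwards [(hcount 1 le_rfl).1.compl_mem_cofinite] with k hk
  have hk : 1 < lam k := not_le.mp hk
  rw [Real.norm_of_nonneg (Real.rpow_nonneg (by linarith) _)]
  exact Real.rpow_le_rpow_of_nonpos (by positivity) (two_pow_log_floor_le hk.le) (by linarith)

theorem summable_exp_neg_mul_of_card_le (hpos : ∀ k, 0 < lam k) {t : ℝ} (ht : 0 < t) :
    Summable fun k => Real.exp (-(lam k) * t) := by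
  refine ((summable_rpow_neg_of_card_le hcount one_lt_two).mul_left (2 / t ^ 2)).of_nonneg_of_le
    (fun _ => (Real.exp_pos _).le) fun k => ?_
  calc Real.exp (-(lam k) * t) = Real.exp (-(lam k * t)) := by rw [neg_mul]
    _ ≤ 2 / (lam k * t) ^ 2 := Real.exp_neg_le_two_div_sq (mul_pos (hpos k) ht)
    _ = 2 / t ^ 2 * lam k ^ (-2 : ℝ) := by
      rw [Real.rpow_neg (hpos k).le, Real.rpow_two]
      field_simp

end CountingFunction

section MellinTerm

variable {s : ℂ} {r : ℝ}

theorem integral_cpow_mul_exp_neg_mul_Ioi_eq_gamma_mul (hs : 0 < s.re) (hr : 0 < r) :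
    ∫ t : ℝ in Set.Ioi 0, (t : ℂ) ^ (s - 1) * cexp (-(r * t)) = Gamma s * (r : ℂ) ^ (-s) := by
  rw [integral_cpow_mul_exp_neg_mul_Ioi hs hr, one_div,
    inv_cpow _ _ (by rw [arg_ofReal_of_nonneg hr.le]; exact Real.pi_pos.ne), ← cpow_neg, mul_comm]

-- The integral is `Γ(s) r^{-s} ≠ 0`, and a non-integrable function has integral `0`.
theorem integrableOn_cpow_mul_exp_neg_mul_Ioi (hs : 0 < s.re) (hr : 0 < r) :
    IntegrableOn (fun t : ℝ => (t : ℂ) ^ (s - 1) * cexp (-(r * t))) (Set.Ioi 0) := by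
  refine Integrable.of_integral_ne_zero ?_
  rw [integral_cpow_mul_exp_neg_mul_Ioi_eq_gamma_mul hs hr]
  exact mul_ne_zero (Gamma_ne_zero_of_re_pos hs)
    (cpow_ne_zero_iff.mpr (.inl (ofReal_ne_zero.mpr hr.ne')))

theorem integral_norm_cpow_mul_exp_neg_mul_Ioi (hs : 0 < s.re) (hr : 0 < r) :
    ∫ t : ℝ in Set.Ioi 0, ‖(t : ℂ) ^ (s - 1) * cexp (-(r * t))‖ =
      Real.Gamma s.re * r ^ (-s.re) := by
  have hnorm : ∀ t ∈ Set.Ioi (0 : ℝ),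
      ‖(t : ℂ) ^ (s - 1) * cexp (-(r * t))‖ = t ^ (s.re - 1) * Real.exp (-(r * t)) := by
    intro t ht
    rw [norm_mul, norm_cpow_eq_rpow_re_of_pos ht, ← ofReal_mul, ← ofReal_neg, norm_exp_ofReal,
      sub_re, one_re]
  rw [setIntegral_congr_fun measurableSet_Ioi hnorm, Real.integral_rpow_mul_exp_neg_mul_Ioi hs hr,
    one_div, Real.inv_rpow hr.le, ← Real.rpow_neg hr.le, mul_comm]

end MellinTerm

noncomputable def heatTrace {ι : Type*} (lam : ι → ℝ) (t : ℝ) : ℝ :=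
  ∑' k, Real.exp (-(lam k) * t)

theorem ofReal_heatTrace_mul_cpow {ι : Type*} (lam : ι → ℝ) (s : ℂ) (t : ℝ) :
    (heatTrace lam t : ℂ) * (t : ℂ) ^ (s - 1) = ∑' k, (t : ℂ) ^ (s - 1) * cexp (-(lam k * t)) := by
  rw [heatTrace, ofReal_tsum, ← tsum_mul_right]
  congr 1 with k
  push_cast
  ring_nf

section HeatTraceMellin

variable {ι : Type*} {lam : ι → ℝ} (hpos : ∀ k, 0 < lam k) {s : ℂ}
  (hs : 0 < s.re) (hsum : Summable fun k => lam k ^ (-s.re))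
include hpos hs hsum

theorem summable_integral_norm_cpow_mul_exp_neg_mul :
    Summable fun k => ∫ t : ℝ in Set.Ioi 0, ‖(t : ℂ) ^ (s - 1) * cexp (-(lam k * t))‖ := by
  simp_rw [integral_norm_cpow_mul_exp_neg_mul_Ioi hs (hpos _)]
  exact hsum.mul_left _

variable [Countable ι]

theorem integrableOn_heatTrace_mul_cpow :
    IntegrableOn (fun t : ℝ => (heatTrace lam t : ℂ) * (t : ℂ) ^ (s - 1)) (Set.Ioi 0) := by
  simp_rw [ofReal_heatTrace_mul_cpow]
  exact integrable_tsum_of_summable_integral_norm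
    (fun k => integrableOn_cpow_mul_exp_neg_mul_Ioi hs (hpos k))
    (summable_integral_norm_cpow_mul_exp_neg_mul hpos hs hsum)

theorem gamma_mul_tsum_cpow_neg_eq_integral_heatTrace_mul_cpow :
    Gamma s * ∑' k, (lam k : ℂ) ^ (-s) =
      ∫ t : ℝ in Set.Ioi 0, (heatTrace lam t : ℂ) * (t : ℂ) ^ (s - 1) := by
  simp_rw [ofReal_heatTrace_mul_cpow, ← tsum_mul_left,
    ← integral_cpow_mul_exp_neg_mul_Ioi_eq_gamma_mul hs (hpos _)]
  exact integral_tsum_of_summable_integral_norm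
    (fun k => integrableOn_cpow_mul_exp_neg_mul_Ioi hs (hpos k))
    (summable_integral_norm_cpow_mul_exp_neg_mul hpos hs hsum)

end HeatTraceMellin

theorem gamma_mul_zeta_eq_mellin_of_heat_trace_general (lam : ℕ → ℝ)
    (hpos : ∀ k, 0 < lam k) (C : ℝ)
    (hcount : ∀ T : ℝ, 1 ≤ T → ∃ h : Set.Finite {k | lam k ≤ T},
      (h.toFinset.card : ℝ) ≤ C * T) :
    ∀ s : ℂ, 1 < s.re →
      Summable (fun k => ‖(lam k : ℂ) ^ (-s)‖) ∧
      (∀ t : ℝ, 0 < t → Summable (fun k => |Real.exp (-(lam k) * t)|)) ∧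
      IntegrableOn
        (fun t : ℝ => ((∑' k, Real.exp (-(lam k) * t) : ℝ) : ℂ) * (t : ℂ) ^ (s - 1))
        (Set.Ioi 0) ∧
      Complex.Gamma s * ∑' k, (lam k : ℂ) ^ (-s) =
        ∫ t in Set.Ioi (0 : ℝ),
          ((∑' k, Real.exp (-(lam k) * t) : ℝ) : ℂ) * (t : ℂ) ^ (s - 1) := by
  intro s hs
  have hs0 : 0 < s.re := by linarith
  have hsum := summable_rpow_neg_of_card_le hcount hs
  refine ⟨hsum.congr fun k => ?_, fun t ht => ?_,
    integrableOn_heatTrace_mul_cpow hpos hs0 hsum,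
    gamma_mul_tsum_cpow_neg_eq_integral_heatTrace_mul_cpow hpos hs0 hsum⟩
  · rw [norm_cpow_eq_rpow_re_of_pos (hpos k), neg_re]
  · simpa only [Real.abs_exp] using summable_exp_neg_mul_of_card_le hcount hpos ht

/-- Mellin representation of the operator zeta function: if the counting
function of the positive sequence `(λ_k)` grows at most linearly, then for
`Re s > 1` the series `Σ_k λ_k^{−s}` and, for each `t > 0`, `Σ_k e^{−λ_k t}`
converge absolutely, `t ↦ (Σ_k e^{−λ_k t}) t^{s−1}` is integrable on `(0,∞)`,
and `Γ(s) Σ_k λ_k^{−s} = ∫₀^∞ (Σ_k e^{−λ_k t}) t^{s−1} dt`. -/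
theorem gamma_mul_zeta_eq_mellin_of_heat_trace (lam : ℕ → ℝ)
    (hpos : ∀ k, 0 < lam k) (C : ℝ) (hC : 0 < C)
    (hcount : ∀ T : ℝ, 1 ≤ T → ∃ h : Set.Finite {k | lam k ≤ T},
      (h.toFinset.card : ℝ) ≤ C * T) :
    ∀ s : ℂ, 1 < s.re →
      Summable (fun k => ‖(lam k : ℂ) ^ (-s)‖) ∧
      (∀ t : ℝ, 0 < t → Summable (fun k => |Real.exp (-(lam k) * t)|)) ∧
      IntegrableOn
        (fun t : ℝ => ((∑' k, Real.exp (-(lam k) * t) : ℝ) : ℂ) * (t : ℂ) ^ (s - 1))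
        (Set.Ioi 0) ∧
      Complex.Gamma s * ∑' k, (lam k : ℂ) ^ (-s) =
        ∫ t in Set.Ioi (0 : ℝ),
          ((∑' k, Real.exp (-(lam k) * t) : ℝ) : ℂ) * (t : ℂ) ^ (s - 1) :=
  gamma_mul_zeta_eq_mellin_of_heat_trace_general lam hpos C hcount
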